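/- arXiv:2405.07951 — 2 statements merged into one kernel-verified Lean document; each statement's English description precedes it below -/
import Mathlib

section
/- Let μ be a finite measure on ℝ with all moments finite. Then for every k ≥ 1, the determinant of the k×k Hankel matrix of moments, det(∫ λ^{i+j-2} dμ(λ))_{i,j=1}^k, equals (1/k!) ∫_{ℝ^k} ∏_{1 ≤ i < j ≤ k} (λ_j - λ_i)^2 dμ(λ_1)⋯dμ(λ_k). -/
open Finset MeasureTheory
open Equiv

lemma integral_pi_prod {k : ℕ} (μ : Measure ℝ) [SigmaFinite μ] (f : Fin k → ℝ → ℝ) :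
    ∫ x : Fin k → ℝ, ∏ i, f i (x i) ∂(Measure.pi fun _ => μ) = ∏ i, ∫ x, f i x ∂μ := by
  letI : MeasureSpace ℝ := ⟨μ⟩
  exact MeasureTheory.integral_fintype_prod_eq_prod f (μ := fun _ => μ)

lemma integrable_pi_prod {k : ℕ} (μ : Measure ℝ) [SigmaFinite μ] (f : Fin k → ℝ → ℝ)
    (hf : ∀ i, Integrable (f i) μ) :
    Integrable (fun x : Fin k → ℝ => ∏ i, f i (x i)) (Measure.pi fun _ => μ) := by
  letI : MeasureSpace ℝ := ⟨μ⟩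
  exact Integrable.fintype_prod hf

lemma prod_filter_lt {k : ℕ} (f : Fin k → Fin k → ℝ) :
    ∏ p ∈ Finset.univ.filter (fun p : Fin k × Fin k => p.1 < p.2), f p.1 p.2
      = ∏ i, ∏ j ∈ Finset.Ioi i, f i j := by
  rw [Finset.prod_filter, Fintype.prod_prod_type]
  refine Finset.prod_congr rfl fun i _ => ?_
  rw [← Finset.filter_lt_eq_Ioi, ← Finset.prod_filter]

lemma sum_perm_aux (k : ℕ) (m : ℕ → ℝ) :
    ∑ σ : Perm (Fin k), ∑ τ : Perm (Fin k),
      ((Perm.sign σ : ℤ) : ℝ) * ((Perm.sign τ : ℤ) : ℝ) *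
        ∏ j, m ((σ⁻¹ j : Fin k) + (τ⁻¹ j : Fin k))
    = (k.factorial : ℝ) *
        ∑ σ : Perm (Fin k), ((Perm.sign σ : ℤ) : ℝ) * ∏ i, m ((σ i : ℕ) + (i : ℕ)) := by
  -- remove inverses
  have h1 : ∀ f : Perm (Fin k) → ℝ, ∑ σ : Perm (Fin k), f σ⁻¹ = ∑ σ : Perm (Fin k), f σ := by
    intro f
    exact Fintype.sum_equiv (Equiv.inv (Perm (Fin k))) _ _ (fun σ => rfl)
  calc
    ∑ σ : Perm (Fin k), ∑ τ : Perm (Fin k),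
        ((Perm.sign σ : ℤ) : ℝ) * ((Perm.sign τ : ℤ) : ℝ) *
          ∏ j, m ((σ⁻¹ j : Fin k) + (τ⁻¹ j : Fin k))
      = ∑ σ : Perm (Fin k), ∑ τ : Perm (Fin k),
        ((Perm.sign σ : ℤ) : ℝ) * ((Perm.sign τ : ℤ) : ℝ) *
          ∏ j, m ((σ j : Fin k) + (τ j : Fin k)) := by
        rw [← h1 (fun σ => ∑ τ : Perm (Fin k), ((Perm.sign σ : ℤ) : ℝ) * ((Perm.sign τ : ℤ) : ℝ) *
          ∏ j, m ((σ j : Fin k) + (τ j : Fin k)))]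
        refine Finset.sum_congr rfl fun σ _ => ?_
        rw [← h1 (fun τ => ((Perm.sign σ⁻¹ : ℤ) : ℝ) * ((Perm.sign τ : ℤ) : ℝ) *
          ∏ j, m ((σ⁻¹ j : Fin k) + (τ j : Fin k)))]
        simp [Equiv.Perm.sign_inv]
    _ = ∑ τ : Perm (Fin k), ∑ σ : Perm (Fin k),
        ((Perm.sign σ : ℤ) : ℝ) * ((Perm.sign τ : ℤ) : ℝ) *
          ∏ j, m ((σ j : Fin k) + (τ j : Fin k)) := Finset.sum_comm
    _ = ∑ τ : Perm (Fin k), ∑ ρ : Perm (Fin k),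
        ((Perm.sign ρ : ℤ) : ℝ) * ∏ i, m ((ρ i : ℕ) + (i : ℕ)) := by
        refine Finset.sum_congr rfl fun τ _ => ?_
        rw [← Fintype.sum_equiv (Equiv.mulRight τ)
          (fun ρ => ((Perm.sign (ρ * τ) : ℤ) : ℝ) * ((Perm.sign τ : ℤ) : ℝ) *
            ∏ j, m (((ρ * τ) j : Fin k) + (τ j : Fin k)))
          (fun σ => ((Perm.sign σ : ℤ) : ℝ) * ((Perm.sign τ : ℤ) : ℝ) *
            ∏ j, m ((σ j : Fin k) + (τ j : Fin k))) (fun ρ => rfl)]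
        refine Finset.sum_congr rfl fun ρ _ => ?_
        have hsign : ((Perm.sign (ρ * τ) : ℤ) : ℝ) * ((Perm.sign τ : ℤ) : ℝ)
            = ((Perm.sign ρ : ℤ) : ℝ) := by
          rw [Equiv.Perm.sign_mul]
          push_cast
          rcases Int.units_eq_one_or (Perm.sign τ) with h | h <;> rw [h] <;> norm_num
        rw [hsign]
        congr 1
        rw [← Equiv.prod_comp τ (fun i => m ((ρ i : ℕ) + (i : ℕ)))]
        rfl
    _ = (k.factorial : ℝ) *
        ∑ σ : Perm (Fin k), ((Perm.sign σ : ℤ) : ℝ) * ∏ i, m ((σ i : ℕ) + (i : ℕ)) := by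
        rw [Finset.sum_const, nsmul_eq_mul]
        congr 1
        rw [Finset.card_univ, Fintype.card_perm, Fintype.card_fin]

/-- For a finite measure `μ` on `ℝ` with all moments finite, the `k × k` Hankel
moment determinant equals `(1/k!) ∫_{ℝ^k} ∏_{i<j} (λ_j - λ_i)² dμ^{⊗k}`. -/
theorem hankel_det_eq_vandermonde_integral
    (μ : Measure ℝ) [IsFiniteMeasure μ]
    (hmom : ∀ m : ℕ, Integrable (fun x : ℝ => x ^ m) μ)
    (k : ℕ) (hk : 1 ≤ k) :
    Matrix.det (Matrix.of fun i j : Fin k => ∫ x, x ^ ((i : ℕ) + (j : ℕ)) ∂μ)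
      = (1 / (Nat.factorial k : ℝ)) *
        ∫ lam : Fin k → ℝ,
          (∏ p ∈ Finset.univ.filter (fun p : Fin k × Fin k => p.1 < p.2),
            (lam p.2 - lam p.1) ^ 2)
          ∂(Measure.pi fun _ : Fin k => μ) := by
  set m : ℕ → ℝ := fun n => ∫ x, x ^ n ∂μ with hm
  -- rewrite the integrand as an explicit double permutation sum
  have hint : ∀ lam : Fin k → ℝ,
      (∏ p ∈ Finset.univ.filter (fun p : Fin k × Fin k => p.1 < p.2), (lam p.2 - lam p.1) ^ 2)
      = ∑ st : Perm (Fin k) × Perm (Fin k),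
          ((Perm.sign st.1 : ℤ) : ℝ) * ((Perm.sign st.2 : ℤ) : ℝ) *
            ∏ j, lam j ^ (((st.1⁻¹ j : Fin k) : ℕ) + ((st.2⁻¹ j : Fin k) : ℕ)) := by
    intro lam
    have hP : ∀ σ : Perm (Fin k),
        ∏ i, lam (σ i) ^ (i : ℕ) = ∏ j, lam j ^ ((σ⁻¹ j : Fin k) : ℕ) := by
      intro σ
      rw [← Equiv.prod_comp σ (fun j => lam j ^ ((σ⁻¹ j : Fin k) : ℕ))]
      simp
    calc
      (∏ p ∈ Finset.univ.filter (fun p : Fin k × Fin k => p.1 < p.2), (lam p.2 - lam p.1) ^ 2)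
        = (Matrix.det (Matrix.vandermonde lam)) ^ 2 := by
          rw [Finset.prod_pow, Matrix.det_vandermonde]
          congr 1
          exact prod_filter_lt (fun i j => lam j - lam i)
      _ = ∑ st : Perm (Fin k) × Perm (Fin k),
          ((Perm.sign st.1 : ℤ) : ℝ) * ((Perm.sign st.2 : ℤ) : ℝ) *
            ∏ j, lam j ^ (((st.1⁻¹ j : Fin k) : ℕ) + ((st.2⁻¹ j : Fin k) : ℕ)) := by
          rw [sq, Matrix.det_apply', Finset.sum_mul_sum, ← Finset.sum_product']
          rw [← Finset.univ_product_univ]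
          refine Finset.sum_congr rfl fun st _ => ?_
          simp only [Matrix.vandermonde_apply]
          rw [mul_mul_mul_comm, hP st.1, hP st.2, ← Finset.prod_mul_distrib]
          congr 1
          refine Finset.prod_congr rfl fun j _ => ?_
          rw [pow_add]
  -- integrate term by term
  have hInt : ∀ st : Perm (Fin k) × Perm (Fin k),
      Integrable (fun lam : Fin k → ℝ =>
        ((Perm.sign st.1 : ℤ) : ℝ) * ((Perm.sign st.2 : ℤ) : ℝ) *
          ∏ j, lam j ^ (((st.1⁻¹ j : Fin k) : ℕ) + ((st.2⁻¹ j : Fin k) : ℕ)))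
        (Measure.pi fun _ : Fin k => μ) := by
    intro st
    exact (integrable_pi_prod μ
      (fun j x => x ^ (((st.1⁻¹ j : Fin k) : ℕ) + ((st.2⁻¹ j : Fin k) : ℕ)))
      (fun j => hmom _)).const_mul _
  have hI : ∫ lam : Fin k → ℝ,
      (∏ p ∈ Finset.univ.filter (fun p : Fin k × Fin k => p.1 < p.2), (lam p.2 - lam p.1) ^ 2)
      ∂(Measure.pi fun _ : Fin k => μ)
      = ∑ st : Perm (Fin k) × Perm (Fin k),
          ((Perm.sign st.1 : ℤ) : ℝ) * ((Perm.sign st.2 : ℤ) : ℝ) *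
            ∏ j, m (((st.1⁻¹ j : Fin k) : ℕ) + ((st.2⁻¹ j : Fin k) : ℕ)) := by
    simp_rw [hint]
    rw [integral_finset_sum _ (fun st _ => hInt st)]
    refine Finset.sum_congr rfl fun st _ => ?_
    rw [integral_const_mul, integral_pi_prod μ
      (fun j x => x ^ (((st.1⁻¹ j : Fin k) : ℕ) + ((st.2⁻¹ j : Fin k) : ℕ)))]
  rw [hI, Fintype.sum_prod_type]
  dsimp only
  rw [sum_perm_aux k m, Matrix.det_apply']
  have hfac : (k.factorial : ℝ) ≠ 0 := Nat.cast_ne_zero.mpr k.factorial_ne_zero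
  rw [one_div, inv_mul_cancel_left₀ hfac]
  rfl
end

section
/- With the setup above, ‖e^{Λt}u_0‖² · e^{-2Λ_1 t} → u_0(1)² as t → ∞; hence Δ_k(t) e^{-2(∑_{l=1}^k Λ_l − kΛ_1)t} → ∏_{i<j≤k}(Λ_i−Λ_j)² ∏_{l=1}^k (u_0(l)/u_0(1))², exhibiting exponential scattering rates determined by eigenvalue gaps. -/
open Finset Filter Real

lemma det_rows_aux (k : ℕ) (Λ c : ℕ → ℝ) (d : Fin k → ℕ) :
    Matrix.det (Matrix.of fun i j : Fin k => Λ (d i) ^ ((i:ℕ)+(j:ℕ)) * c (d i)) =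
      (∏ i : Fin k, Λ (d i) ^ (i:ℕ) * c (d i)) *
        ∏ i : Fin k, ∏ j ∈ Finset.Ioi i, (Λ (d j) - Λ (d i)) := by
  have h : (Matrix.of fun i j : Fin k => Λ (d i) ^ ((i:ℕ)+(j:ℕ)) * c (d i)) =
      Matrix.of (fun i j : Fin k => (Λ (d i) ^ (i:ℕ) * c (d i)) *
        (Matrix.vandermonde fun i => Λ (d i)) i j) := by
    ext i j
    simp [Matrix.vandermonde, pow_add]
    ring
  rw [h, Matrix.det_mul_column, Matrix.det_vandermonde]

lemma det_expand_aux (k : ℕ) (s : Finset ℕ) (Λ c : ℕ → ℝ) :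
    Matrix.det (Matrix.of fun i j : Fin k => ∑ m ∈ s, Λ m ^ ((i : ℕ) + (j : ℕ)) * c m) =
      ∑ d ∈ Fintype.piFinset (fun _ : Fin k => s),
        (∏ i : Fin k, Λ (d i) ^ (i : ℕ) * c (d i)) *
          ∏ i : Fin k, ∏ j ∈ Finset.Ioi i, (Λ (d j) - Λ (d i)) := by
  have h1 : (Matrix.of fun i j : Fin k => ∑ m ∈ s, Λ m ^ ((i:ℕ)+(j:ℕ)) * c m)
      = fun i : Fin k => ∑ m ∈ s, (fun j : Fin k => Λ m ^ ((i:ℕ)+(j:ℕ)) * c m) := by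
    ext i j
    simp [Finset.sum_apply]
  have h2 := (Matrix.detRowAlternating (R := ℝ) (n := Fin k)).toMultilinearMap.map_sum_finset
    (fun i m => fun j : Fin k => Λ m ^ ((i:ℕ)+(j:ℕ)) * c m) (fun _ => s)
  simp only [AlternatingMap.coe_multilinearMap] at h2
  calc Matrix.det (Matrix.of fun i j : Fin k => ∑ m ∈ s, Λ m ^ ((i:ℕ)+(j:ℕ)) * c m)
      = Matrix.detRowAlternating
          (fun i : Fin k => ∑ m ∈ s, (fun j : Fin k => Λ m ^ ((i:ℕ)+(j:ℕ)) * c m)) := by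
        rw [h1]; rfl
    _ = ∑ d ∈ Fintype.piFinset (fun _ : Fin k => s),
          Matrix.detRowAlternating
            (fun i : Fin k => fun j : Fin k => Λ (d i) ^ ((i:ℕ)+(j:ℕ)) * c (d i)) := h2
    _ = _ := by
        refine Finset.sum_congr rfl fun d _ => ?_
        exact det_rows_aux k Λ c d

lemma det_hankel_aux (k : ℕ) (Λ c : ℕ → ℝ) :
    Matrix.det (Matrix.of fun i j : Fin k => ∑ m ∈ Finset.range k, Λ m ^ ((i:ℕ)+(j:ℕ)) * c m) =
      (∏ i : Fin k, ∏ j ∈ Finset.Ioi i, (Λ (j:ℕ) - Λ (i:ℕ)))^2 * ∏ m ∈ Finset.range k, c m := by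
  have h : (Matrix.of fun i j : Fin k => ∑ m ∈ Finset.range k, Λ m ^ ((i:ℕ)+(j:ℕ)) * c m)
      = Matrix.transpose (Matrix.vandermonde fun m : Fin k => Λ (m:ℕ)) *
        Matrix.of (fun m j : Fin k => c (m:ℕ) *
          (Matrix.vandermonde fun m : Fin k => Λ (m:ℕ)) m j) := by
    ext i j
    simp only [Matrix.of_apply, Matrix.mul_apply, Matrix.transpose_apply,
      Matrix.vandermonde_apply]
    rw [← Fin.sum_univ_eq_sum_range]
    refine Finset.sum_congr rfl fun m _ => ?_
    rw [pow_add]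
    ring
  rw [h, Matrix.det_mul, Matrix.det_transpose, Matrix.det_mul_column, Matrix.det_vandermonde,
    ← Fin.prod_univ_eq_prod_range]
  ring

lemma prod_Ioi_fin_aux (k : ℕ) (f : ℕ → ℕ → ℝ) :
    ∏ i : Fin k, ∏ j ∈ Finset.Ioi i, f (i:ℕ) (j:ℕ) =
      ∏ i ∈ Finset.range k, ∏ j ∈ Finset.Ioo i k, f i j := by
  rw [← Fin.prod_univ_eq_prod_range]
  refine Finset.prod_congr rfl fun i _ => ?_
  have h1 : ∏ j ∈ (Finset.Ioi i).map Fin.valEmbedding, f (i:ℕ) j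
      = ∏ j ∈ Finset.Ioi i, f (i:ℕ) (j:ℕ) := Finset.prod_map _ _ _
  rw [← h1, Fin.map_valEmbedding_Ioi]

lemma fin_le_strictMono_aux {k : ℕ} (f : Fin k → ℕ) (hf : StrictMono f) :
    ∀ i : Fin k, (i:ℕ) ≤ f i := by
  intro ⟨i, hi⟩
  induction i with
  | zero => exact Nat.zero_le _
  | succ m ih =>
    have h1 : (⟨m, Nat.lt_of_succ_lt hi⟩ : Fin k) < ⟨m+1, hi⟩ := by simp [Fin.lt_def]
    have h2 := hf h1
    have h3 := ih (Nat.lt_of_succ_lt hi)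
    simp at h2 h3 ⊢
    omega

lemma sum_eq_of_bij_aux (k : ℕ) (Λ : ℕ → ℝ) (d : Fin k → ℕ) (hd : Function.Injective d)
    (hlt : ∀ i, d i < k) : ∑ i : Fin k, Λ (d i) = ∑ l ∈ Finset.range k, Λ l := by
  have himg : Finset.image d Finset.univ = Finset.range k := by
    apply Finset.eq_of_subset_of_card_le
    · intro m hm
      simp only [Finset.mem_image, Finset.mem_univ, true_and] at hm
      obtain ⟨i, rfl⟩ := hm
      exact Finset.mem_range.2 (hlt i)
    · rw [Finset.card_range, Finset.card_image_of_injective _ hd, Finset.card_univ,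
        Fintype.card_fin]
  rw [← himg, Finset.sum_image (fun i _ j _ h => hd h)]

lemma sum_lt_of_esc_aux (n k : ℕ) (Λ : ℕ → ℝ)
    (hΛ : ∀ i j, i < j → j < n → Λ j < Λ i)
    (d : Fin k → ℕ) (hd : Function.Injective d) (hdn : ∀ i, d i < n)
    (i0 : Fin k) (hi0 : k ≤ d i0) :
    ∑ i : Fin k, Λ (d i) < ∑ l ∈ Finset.range k, Λ l := by
  set s : Finset ℕ := Finset.image d Finset.univ with hs
  have hcard : s.card = k := by
    rw [hs, Finset.card_image_of_injective _ hd, Finset.card_univ, Fintype.card_fin]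
  have himg : Finset.image (fun i => s.orderEmbOfFin hcard i) Finset.univ = s := by
    apply Finset.coe_injective
    rw [Finset.coe_image, Finset.coe_univ, Set.image_univ, Finset.range_orderEmbOfFin]
  have hsum1 : ∑ i : Fin k, Λ (d i) = ∑ i : Fin k, Λ (s.orderEmbOfFin hcard i) := by
    have ha : ∑ m ∈ Finset.image d Finset.univ, Λ m = ∑ i : Fin k, Λ (d i) :=
      Finset.sum_image (fun i _ j _ h => hd h)
    have hb : ∑ m ∈ Finset.image (fun i => s.orderEmbOfFin hcard i) Finset.univ, Λ m
        = ∑ i : Fin k, Λ (s.orderEmbOfFin hcard i) :=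
      Finset.sum_image (fun i _ j _ h => (s.orderEmbOfFin hcard).injective h)
    rw [← ha, ← hb, himg]
  have hle : ∀ i : Fin k, (i:ℕ) ≤ s.orderEmbOfFin hcard i :=
    fin_le_strictMono_aux _ (s.orderEmbOfFin hcard).strictMono
  have hmem : ∀ i : Fin k, (s.orderEmbOfFin hcard i : ℕ) < n := by
    intro i
    have h := Finset.orderEmbOfFin_mem s hcard i
    obtain ⟨j, _, hj⟩ := Finset.mem_image.1 h
    rw [← hj]; exact hdn j
  have hd0 : d i0 ∈ Set.range (s.orderEmbOfFin hcard) := by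
    rw [Finset.range_orderEmbOfFin]
    exact Finset.mem_coe.2 (Finset.mem_image.2 ⟨i0, Finset.mem_univ _, rfl⟩)
  obtain ⟨i1, hi1⟩ := hd0
  have hlt1 : (i1:ℕ) < s.orderEmbOfFin hcard i1 := by
    have := i1.isLt
    omega
  rw [hsum1, ← Fin.sum_univ_eq_sum_range]
  apply Finset.sum_lt_sum
  · intro i _
    rcases eq_or_lt_of_le (hle i) with h | h
    · rw [← h]
    · exact le_of_lt (hΛ i _ h (hmem i))
  · exact ⟨i1, Finset.mem_univ _, hΛ i1 _ hlt1 (hmem i1)⟩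

lemma tendsto_exp_neg_coeff_aux {c : ℝ} (hc : c < 0) :
    Tendsto (fun t : ℝ => Real.exp (c*t)) atTop (nhds 0) := by
  have h2 : Tendsto (fun t : ℝ => -c*t) atTop atTop :=
    Tendsto.const_mul_atTop (by linarith) tendsto_id
  have h3 := Real.tendsto_exp_neg_atTop_nhds_zero.comp h2
  refine h3.congr fun t => ?_
  simp [Function.comp]

lemma part1_aux (n : ℕ) (hn : 0 < n) (Λ u0 : ℕ → ℝ)
    (hΛ : ∀ i j, i < j → j < n → Λ j < Λ i)
    (N : ℝ → ℝ)
    (hN : ∀ t, N t = ∑ m ∈ Finset.range n, Real.exp (2 * Λ m * t) * (u0 m) ^ 2) :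
    Tendsto (fun t => N t * Real.exp (-2 * Λ 0 * t)) atTop (nhds ((u0 0) ^ 2)) := by
  have heq : ∀ t, N t * Real.exp (-2*Λ 0*t)
      = ∑ m ∈ Finset.range n, Real.exp (2*(Λ m - Λ 0)*t) * u0 m^2 := by
    intro t
    rw [hN, Finset.sum_mul]
    refine Finset.sum_congr rfl fun m _ => ?_
    rw [show (2*(Λ m - Λ 0)*t) = 2*Λ m*t + (-2*Λ 0*t) by ring, Real.exp_add]
    ring
  have hval : (u0 0:ℝ)^2 = ∑ m ∈ Finset.range n, (if m = 0 then u0 0^2 else 0) := by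
    rw [Finset.sum_ite_eq' (Finset.range n) 0 (fun _ => u0 0^2)]
    simp [Finset.mem_range.2 hn]
  rw [hval]
  refine Tendsto.congr (fun t => (heq t).symm) ?_
  apply tendsto_finset_sum
  intro m hm
  rcases Nat.eq_zero_or_pos m with rfl | hm0
  · simp only [sub_self, mul_zero, zero_mul, Real.exp_zero, one_mul, if_pos rfl]
    exact tendsto_const_nhds
  · have hc : 2*(Λ m - Λ 0) < 0 := by
      have := hΛ 0 m hm0 (Finset.mem_range.1 hm)
      linarith
    rw [if_neg (by omega)]
    have h := (tendsto_exp_neg_coeff_aux hc).mul_const (u0 m ^ 2)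
    simpa using h

noncomputable def Lfun (k : ℕ) (Λ u0 : ℕ → ℝ) : (Fin k → ℕ) → ℝ := fun d =>
  if ∀ i : Fin k, d i < k then
    ((∏ i : Fin k, Λ (d i)^(i:ℕ) * u0 (d i)^2) *
      ∏ i : Fin k, ∏ j ∈ Finset.Ioi i, (Λ (d j) - Λ (d i))) * ((u0 0^2)⁻¹)^k
  else 0

lemma Lsum_aux (n k : ℕ) (hk : k ≤ n) (Λ u0 : ℕ → ℝ) :
    ∑ d ∈ Fintype.piFinset (fun _ : Fin k => Finset.range n), Lfun k Λ u0 d =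
      (∏ i ∈ Finset.range k, ∏ j ∈ Finset.Ioo i k, (Λ i - Λ j)^2) *
        ∏ l ∈ Finset.range k, (u0 l / u0 0)^2 := by
  have hsub : Fintype.piFinset (fun _ : Fin k => Finset.range k)
      ⊆ Fintype.piFinset (fun _ : Fin k => Finset.range n) :=
    Fintype.piFinset_subset _ _ (fun _ => Finset.range_subset_range.2 hk)
  rw [← Finset.sum_subset hsub]
  · have h1 : ∑ d ∈ Fintype.piFinset (fun _ : Fin k => Finset.range k), Lfun k Λ u0 d
        = (∑ d ∈ Fintype.piFinset (fun _ : Fin k => Finset.range k),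
            (∏ i : Fin k, Λ (d i)^(i:ℕ) * u0 (d i)^2) *
              ∏ i : Fin k, ∏ j ∈ Finset.Ioi i, (Λ (d j) - Λ (d i))) * ((u0 0^2)⁻¹)^k := by
      rw [Finset.sum_mul]
      refine Finset.sum_congr rfl fun d hd => ?_
      rw [Lfun, if_pos (fun i => Finset.mem_range.1 (Fintype.mem_piFinset.1 hd i))]
    rw [h1, ← det_expand_aux k (Finset.range k) Λ (fun m => u0 m^2), det_hankel_aux]
    have e1 : (∏ i : Fin k, ∏ j ∈ Finset.Ioi i, (Λ (j:ℕ) - Λ (i:ℕ)))^2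
        = ∏ i ∈ Finset.range k, ∏ j ∈ Finset.Ioo i k, (Λ i - Λ j)^2 := by
      rw [← prod_Ioi_fin_aux k (fun a b => (Λ a - Λ b)^2), ← Finset.prod_pow]
      refine Finset.prod_congr rfl fun i _ => ?_
      rw [← Finset.prod_pow]
      exact Finset.prod_congr rfl fun j _ => by ring
    have e2 : ∏ l ∈ Finset.range k, (u0 l / u0 0)^2
        = (∏ l ∈ Finset.range k, u0 l^2) * ((u0 0^2)⁻¹)^k := by
      calc ∏ l ∈ Finset.range k, (u0 l / u0 0)^2
          = ∏ l ∈ Finset.range k, (u0 l^2 * (u0 0^2)⁻¹) :=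
            Finset.prod_congr rfl (fun l _ => by rw [div_pow, div_eq_mul_inv])
        _ = (∏ l ∈ Finset.range k, u0 l^2) * ∏ l ∈ Finset.range k, (u0 0^2)⁻¹ :=
            Finset.prod_mul_distrib
        _ = _ := by rw [Finset.prod_const, Finset.card_range]
    rw [e1, e2]
    ring
  · intro d _ hns
    rw [Lfun, if_neg]
    intro hall
    exact hns (Fintype.mem_piFinset.2 fun i => Finset.mem_range.2 (hall i))

/-- With `Λ_1 > … > Λ_n`, `u₀` a unit vector with nonzero entries,
`‖e^{Λt}u₀‖² e^{-2Λ_1 t} → u₀(1)²` as `t → ∞`; hence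
`Δ_k(t) e^{-2(∑_{l≤k} Λ_l − kΛ_1)t} → ∏_{i<j≤k}(Λ_i−Λ_j)² ∏_{l≤k}(u₀(l)/u₀(1))²`,
exhibiting exponential scattering rates determined by eigenvalue gaps. (0-indexed.) -/
theorem scattering_rates_from_eigenvalue_gaps
    (n : ℕ) (hn : 0 < n) (Λ u0 : ℕ → ℝ)
    (hΛ : ∀ i j, i < j → j < n → Λ j < Λ i)
    (hunit : ∑ m ∈ Finset.range n, (u0 m) ^ 2 = 1)
    (hne : ∀ l, l < n → u0 l ≠ 0)
    (N : ℝ → ℝ)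
    (hN : ∀ t, N t = ∑ m ∈ Finset.range n, Real.exp (2 * Λ m * t) * (u0 m) ^ 2)
    (Δ : ℕ → ℝ → ℝ)
    (hΔ : ∀ k t, Δ k t = Matrix.det (Matrix.of fun i j : Fin k =>
      ∑ m ∈ Finset.range n,
        Λ m ^ ((i : ℕ) + (j : ℕ)) * (Real.exp (2 * Λ m * t) * (u0 m) ^ 2 / N t)))
    (k : ℕ) (hk : k ≤ n) :
    Tendsto (fun t => N t * Real.exp (-2 * Λ 0 * t)) atTop (nhds ((u0 0) ^ 2)) ∧
    Tendsto
      (fun t => Δ k t *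
        Real.exp (-2 * ((∑ l ∈ Finset.range k, Λ l) - (k : ℝ) * Λ 0) * t))
      atTop
      (nhds ((∏ i ∈ Finset.range k, ∏ j ∈ Finset.Ioo i k, (Λ i - Λ j) ^ 2)
        * ∏ l ∈ Finset.range k, (u0 l / u0 0) ^ 2)) := by
  have hpart1 := part1_aux n hn Λ u0 hΛ N hN
  refine ⟨hpart1, ?_⟩
  have hu0 : u0 0 ≠ 0 := hne 0 hn
  have glim : Tendsto (fun t => Real.exp (2*Λ 0*t) * (N t)⁻¹) atTop (nhds ((u0 0^2)⁻¹)) := by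
    have h := hpart1.inv₀ (pow_ne_zero 2 hu0)
    refine h.congr fun t => ?_
    rw [mul_inv, show (-2*Λ 0*t) = -(2*Λ 0*t) by ring, Real.exp_neg, inv_inv, mul_comm]
  have gklim : Tendsto (fun t => (Real.exp (2*Λ 0*t) * (N t)⁻¹)^k) atTop
      (nhds (((u0 0^2)⁻¹)^k)) := glim.pow k
  -- T abbreviation
  set T : ℝ := ∑ l ∈ Finset.range k, Λ l with hT
  -- termwise algebraic identity
  have htermeq : ∀ (d : Fin k → ℕ) (t : ℝ),
      ((∏ i : Fin k, Λ (d i)^(i:ℕ) * (Real.exp (2*Λ (d i)*t) * u0 (d i)^2 / N t)) *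
        ∏ i : Fin k, ∏ j ∈ Finset.Ioi i, (Λ (d j) - Λ (d i))) *
          Real.exp (-2*(T - (k:ℝ)*Λ 0)*t)
      = ((∏ i : Fin k, Λ (d i)^(i:ℕ) * u0 (d i)^2) *
          ∏ i : Fin k, ∏ j ∈ Finset.Ioi i, (Λ (d j) - Λ (d i))) *
        ((Real.exp (2*Λ 0*t) * (N t)⁻¹)^k *
          Real.exp (2*((∑ i : Fin k, Λ (d i)) - T)*t)) := by
    intro d t
    have hprod : (∏ i : Fin k, Λ (d i)^(i:ℕ) * (Real.exp (2*Λ (d i)*t) * u0 (d i)^2 / N t))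
        = (∏ i : Fin k, Λ (d i)^(i:ℕ) * u0 (d i)^2) *
          (Real.exp (2*(∑ i : Fin k, Λ (d i))*t) * ((N t)⁻¹)^k) := by
      have h1 : ∀ i : Fin k, Λ (d i)^(i:ℕ) * (Real.exp (2*Λ (d i)*t) * u0 (d i)^2 / N t)
          = (Λ (d i)^(i:ℕ) * u0 (d i)^2) * (Real.exp (2*Λ (d i)*t) * (N t)⁻¹) := by
        intro i; rw [div_eq_mul_inv]; ring
      have h2 : ∏ i : Fin k, (Real.exp (2*Λ (d i)*t) * (N t)⁻¹)
          = Real.exp (2*(∑ i : Fin k, Λ (d i))*t) * ((N t)⁻¹)^k := by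
        rw [Finset.prod_mul_distrib, ← Real.exp_sum, Finset.prod_const, Finset.card_univ,
          Fintype.card_fin]
        congr 2
        rw [Finset.mul_sum, Finset.sum_mul]
      rw [Finset.prod_congr rfl (fun i _ => h1 i), Finset.prod_mul_distrib, h2]
    have hexp : Real.exp (2*(∑ i : Fin k, Λ (d i))*t) * Real.exp (-2*(T - (k:ℝ)*Λ 0)*t)
        = Real.exp (2*((∑ i : Fin k, Λ (d i)) - T)*t) * Real.exp (2*Λ 0*t)^k := by
      rw [← Real.exp_nat_mul, ← Real.exp_add, ← Real.exp_add]
      congr 1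
      ring
    rw [hprod]
    linear_combination ((∏ i : Fin k, Λ (d i)^(i:ℕ) * u0 (d i)^2) *
      (∏ i : Fin k, ∏ j ∈ Finset.Ioi i, (Λ (d j) - Λ (d i))) * ((N t)⁻¹)^k) * hexp
  -- per-term limits
  have hsum_tendsto : Tendsto (fun t =>
      ∑ d ∈ Fintype.piFinset (fun _ : Fin k => Finset.range n),
        ((∏ i : Fin k, Λ (d i)^(i:ℕ) * (Real.exp (2*Λ (d i)*t) * u0 (d i)^2 / N t)) *
          ∏ i : Fin k, ∏ j ∈ Finset.Ioi i, (Λ (d j) - Λ (d i))) *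
            Real.exp (-2*(T - (k:ℝ)*Λ 0)*t))
      atTop (nhds (∑ d ∈ Fintype.piFinset (fun _ : Fin k => Finset.range n),
        Lfun k Λ u0 d)) := by
    apply tendsto_finset_sum
    intro d hd
    have hdn : ∀ i : Fin k, d i < n := fun i =>
      Finset.mem_range.1 (Fintype.mem_piFinset.1 hd i)
    by_cases hinj : Function.Injective d
    · by_cases hall : ∀ i : Fin k, d i < k
      · -- dominant terms
        have hST : (∑ i : Fin k, Λ (d i)) = T := sum_eq_of_bij_aux k Λ d hinj hall
        have h1 : Tendsto (fun t => ((Real.exp (2*Λ 0*t) * (N t)⁻¹)^k *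
            Real.exp (2*((∑ i : Fin k, Λ (d i)) - T)*t))) atTop
            (nhds (((u0 0^2)⁻¹)^k)) := by
          rw [hST]
          simp only [sub_self, mul_zero, zero_mul, Real.exp_zero, mul_one]
          exact gklim
        have h2 := h1.const_mul ((∏ i : Fin k, Λ (d i)^(i:ℕ) * u0 (d i)^2) *
          ∏ i : Fin k, ∏ j ∈ Finset.Ioi i, (Λ (d j) - Λ (d i)))
        refine Tendsto.congr (fun t => (htermeq d t).symm) ?_
        have hL : Lfun k Λ u0 d = ((∏ i : Fin k, Λ (d i)^(i:ℕ) * u0 (d i)^2) *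
            ∏ i : Fin k, ∏ j ∈ Finset.Ioi i, (Λ (d j) - Λ (d i))) * ((u0 0^2)⁻¹)^k := by
          rw [Lfun, if_pos hall]
        rw [hL]
        exact h2
      · -- escaping injective terms: limit 0
        push_neg at hall
        obtain ⟨i0, hi0⟩ := hall
        have hST : (∑ i : Fin k, Λ (d i)) < T :=
          sum_lt_of_esc_aux n k Λ hΛ d hinj hdn i0 (le_of_not_gt (by omega))
        have hc : 2*((∑ i : Fin k, Λ (d i)) - T) < 0 := by linarith
        have h1 : Tendsto (fun t => ((Real.exp (2*Λ 0*t) * (N t)⁻¹)^k *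
            Real.exp (2*((∑ i : Fin k, Λ (d i)) - T)*t))) atTop
            (nhds (((u0 0^2)⁻¹)^k * 0)) :=
          gklim.mul (tendsto_exp_neg_coeff_aux hc)
        have h2 := h1.const_mul ((∏ i : Fin k, Λ (d i)^(i:ℕ) * u0 (d i)^2) *
          ∏ i : Fin k, ∏ j ∈ Finset.Ioi i, (Λ (d j) - Λ (d i)))
        refine Tendsto.congr (fun t => (htermeq d t).symm) ?_
        have hL : Lfun k Λ u0 d = 0 := by
          rw [Lfun, if_neg]
          intro h
          exact absurd (h i0) (by omega)
        rw [hL]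
        simpa using h2
    · -- non-injective: identically zero
      obtain ⟨a, b, hab, hne'⟩ := Function.not_injective_iff.1 hinj
      have hV0 : (∏ i : Fin k, ∏ j ∈ Finset.Ioi i, (Λ (d j) - Λ (d i))) = 0 := by
        rcases lt_or_gt_of_ne hne' with h | h
        · refine Finset.prod_eq_zero (Finset.mem_univ a)
            (Finset.prod_eq_zero (Finset.mem_Ioi.2 h) ?_)
          rw [hab, sub_self]
        · refine Finset.prod_eq_zero (Finset.mem_univ b)
            (Finset.prod_eq_zero (Finset.mem_Ioi.2 h) ?_)
          rw [hab, sub_self]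
      have hL : Lfun k Λ u0 d = 0 := by
        rw [Lfun, hV0]
        simp
      rw [hL]
      refine Tendsto.congr (fun t => ?_) tendsto_const_nhds
      rw [hV0]
      ring
  -- assemble
  rw [show (∏ i ∈ Finset.range k, ∏ j ∈ Finset.Ioo i k, (Λ i - Λ j) ^ 2)
        * ∏ l ∈ Finset.range k, (u0 l / u0 0) ^ 2
      = ∑ d ∈ Fintype.piFinset (fun _ : Fin k => Finset.range n), Lfun k Λ u0 d from
    (Lsum_aux n k hk Λ u0).symm]
  refine Tendsto.congr (fun t => ?_) hsum_tendsto
  rw [hΔ k t, det_expand_aux k (Finset.range n) Λ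
    (fun m => Real.exp (2 * Λ m * t) * u0 m^2 / N t), Finset.sum_mul]
end
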